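/- Let D be a digraph of maximum out-degree Δ⁺ and let d₁, d₂, …, d_p be non-negative integers satisfying d₁ + d₂ + ⋯ + d_p + (p − 1) ≥ 2Δ⁺. Then D has a p-partition (V₁, V₂, …, V_p) such that Δ⁺(D⟨Vᵢ⟩) ≤ dᵢ for every i ∈ [p]. -/

import Mathlib

/-- The number of out-neighbours of `v` lying in `S`, i.e. the out-degree of `v` in the
subdigraph induced by `S` (when `v ∈ S`). -/
noncomputable def outDegOn {V : Type*} (A : V → V → Prop) (S : Set V) (v : V) : ℕ :=
  {w | w ∈ S ∧ A v w}.ncard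

/-- The out-degree `d⁺_D(v)` of `v` in the digraph with arc relation `A`. -/
noncomputable def outDeg {V : Type*} (A : V → V → Prop) (v : V) : ℕ :=
  {w | A v w}.ncard

/-- The maximum out-degree `Δ⁺(D⟨S⟩)` of the subdigraph induced by `S`. -/
noncomputable def maxOutDegOn {V : Type*} (A : V → V → Prop) (S : Set V) : ℕ :=
  sSup ((fun v => outDegOn A S v) '' S)

/-- The maximum out-degree `Δ⁺(D)`. -/
noncomputable def maxOutDeg {V : Type*} (A : V → V → Prop) : ℕ :=
  sSup (Set.range (outDeg A))

/-!
Pick weights `η > 0` with `∑_{u → v} η u < (Δ⁺ + 1) η v` for every `v`: a truncated Neumann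
series `∑_{k < m} (Aᵀ / (Δ⁺ + 1))ᵏ 𝟙` works as soon as `m` is so large that the number of walks
of length `m` (at most `|V| Δ⁺ᵐ`) drops below `(Δ⁺ + 1)ᵐ`. Let an arc `u → w` inside class `i`
cost `η u / (dᵢ + 1)` and take a colouring of minimal total cost. If `v` had more than `d_{c(v)}`
out-neighbours in its own class, the arcs at `v` would cost at least `η v`; but the average of
their costs over all choices of the class of `v`, weighted by `dⱼ + 1`, is below `η v` because
`d₁ + ⋯ + d_p + p ≥ 2Δ⁺ + 1`. So moving `v` to some class would lower the total cost.
-/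

open Finset

lemma Fintype.sum_sum_eq_row_add_col_add_erase {V M : Type*} [Fintype V] [DecidableEq V]
    [AddCommMonoid M] {g : V → V → M} {v : V} (hv : g v v = 0) :
    ∑ u, ∑ w, g u w
      = ∑ w, g v w + ∑ u, g u v + ∑ u ∈ univ.erase v, ∑ w ∈ univ.erase v, g u w := by
  have hsplit (f : V → M) : ∑ u, f u = ∑ u ∈ univ.erase v, f u + f v :=
    (sum_erase_add _ _ (mem_univ v)).symm
  rw [hsplit (fun u => ∑ w, g u w), hsplit (fun u => g u v), hv]
  simp only [hsplit (g _), sum_add_distrib, add_zero]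
  abel

namespace OutDegreePartition

variable {V : Type*} [Fintype V] (A : V → V → Prop) [DecidableRel A]

def outNbrs (v : V) : Finset V := {w | A v w}

def inNbrs (v : V) : Finset V := {u | A u v}

def walkCount : ℕ → V → ℕ
  | 0, _ => 1
  | k + 1, v => ∑ u ∈ inNbrs A v, walkCount k u

def perronWeight (Δ m : ℕ) (v : V) : ℚ :=
  ∑ k ∈ range m, (walkCount A k v : ℚ) / (Δ + 1) ^ k

variable {A}

@[simp] lemma mem_outNbrs {v w : V} : w ∈ outNbrs A v ↔ A v w := by simp [outNbrs]

@[simp] lemma mem_inNbrs {u v : V} : u ∈ inNbrs A v ↔ A u v := by simp [inNbrs]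

lemma sum_walkCount_succ (k : ℕ) :
    ∑ v, walkCount A (k + 1) v = ∑ u, #(outNbrs A u) * walkCount A k u := by
  simp only [walkCount, inNbrs, outNbrs, sum_filter, card_filter, sum_mul, ite_mul, one_mul,
    zero_mul]
  exact sum_comm

lemma sum_walkCount_le {Δ : ℕ} (hΔ : ∀ u, #(outNbrs A u) ≤ Δ) (k : ℕ) :
    ∑ v, walkCount A k v ≤ Fintype.card V * Δ ^ k := by
  induction k with
  | zero => simp [walkCount]
  | succ k ih =>
    calc ∑ v, walkCount A (k + 1) v = ∑ u, #(outNbrs A u) * walkCount A k u :=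
          sum_walkCount_succ k
      _ ≤ ∑ u, Δ * walkCount A k u := by gcongr with u; exact hΔ u
      _ ≤ Δ * (Fintype.card V * Δ ^ k) := by rw [← mul_sum]; gcongr
      _ = Fintype.card V * Δ ^ (k + 1) := by ring

lemma exists_walkCount_lt_pow {Δ : ℕ} (hΔ : ∀ u, #(outNbrs A u) ≤ Δ) :
    ∃ m, ∀ v, walkCount A m v < (Δ + 1) ^ m := by
  obtain ⟨m, hm⟩ := exists_pow_lt_of_lt_one (x := (1 : ℚ) / (Fintype.card V + 1))
    (y := Δ / (Δ + 1)) (by positivity) ((div_lt_one (by positivity)).2 (by linarith))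
  have hcard : Fintype.card V * Δ ^ m < (Δ + 1) ^ m := by
    rw [div_pow, div_lt_div_iff₀ (by positivity) (by positivity)] at hm
    exact_mod_cast (by nlinarith [pow_nonneg (Nat.cast_nonneg (α := ℚ) Δ) m] :
      (Fintype.card V : ℚ) * Δ ^ m < (Δ + 1) ^ m)
  refine ⟨m, fun v => lt_of_le_of_lt ?_ hcard⟩
  exact (single_le_sum (fun u _ => Nat.zero_le _) (mem_univ v)).trans (sum_walkCount_le hΔ m)

lemma sum_inNbrs_perronWeight (Δ m : ℕ) (v : V) :
    ∑ u ∈ inNbrs A v, perronWeight A Δ m u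
      = (Δ + 1) * (perronWeight A Δ m v - 1 + walkCount A m v / (Δ + 1) ^ m) := by
  have hshift := sum_range_succ' (fun k => (walkCount A k v : ℚ) / (Δ + 1) ^ k) m
  rw [sum_range_succ] at hshift
  simp only [walkCount, Nat.cast_one, pow_zero, div_one] at hshift
  have hin : ∑ u ∈ inNbrs A v, perronWeight A Δ m u
      = (Δ + 1) * ∑ k ∈ range m,
          ((∑ u ∈ inNbrs A v, walkCount A k u : ℕ) : ℚ) / (Δ + 1) ^ (k + 1) := by
    simp only [perronWeight]
    rw [sum_comm, mul_sum]
    refine sum_congr rfl fun k _ => ?_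
    rw [← sum_div, Nat.cast_sum, pow_succ]
    field_simp
  rw [hin, perronWeight]
  linear_combination -(Δ + 1 : ℚ) * hshift

theorem exists_weight_sum_inNbrs_lt {Δ : ℕ} (hΔ : ∀ u, #(outNbrs A u) ≤ Δ) :
    ∃ η : V → ℚ, ∀ v, 0 < η v ∧ ∑ u ∈ inNbrs A v, η u < (Δ + 1) * η v := by
  obtain ⟨m, hm⟩ := exists_walkCount_lt_pow hΔ
  have hlt : ∀ v, ∑ u ∈ inNbrs A v, perronWeight A Δ m u
      < (Δ + 1) * perronWeight A Δ m v := by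
    intro v
    have : (walkCount A m v : ℚ) / (Δ + 1) ^ m < 1 :=
      (div_lt_one (by positivity)).2 (by exact_mod_cast hm v)
    rw [sum_inNbrs_perronWeight]
    gcongr
    linarith
  refine ⟨perronWeight A Δ m, fun v => ⟨?_, hlt v⟩⟩
  have : 0 ≤ ∑ u ∈ inNbrs A v, perronWeight A Δ m u :=
    sum_nonneg fun u _ => sum_nonneg fun k _ => by positivity
  nlinarith [hlt v]

section Recolouring

variable (A) {ι : Type*} [DecidableEq ι] (η : V → ℚ) (d : ι → ℕ)

def arcCost (c : V → ι) (u w : V) : ℚ :=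
  if A u w ∧ c u = c w then η u / (d (c u) + 1) else 0

def energy (c : V → ι) : ℚ := ∑ u, ∑ w, arcCost A η d c u w

/-- The cost of the arcs at `v` if `v` is given colour `j` and the other colours are kept. -/
def moveCost (c : V → ι) (v : V) (j : ι) : ℚ :=
  (η v * #{w ∈ outNbrs A v | c w = j} + ∑ u ∈ inNbrs A v with c u = j, η u) / (d j + 1)

variable {A η d}

lemma sum_arcCost_add_sum_arcCost (c : V → ι) (v : V) :
    ∑ w, arcCost A η d c v w + ∑ u, arcCost A η d c u v = moveCost A η d c v (c v) := by
  simp only [arcCost, moveCost, outNbrs, inNbrs, filter_filter, add_div, sum_div]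
  congr 1
  · rw [← sum_filter, sum_const, nsmul_eq_mul, mul_div_assoc, mul_comm]
    simp only [eq_comm]
    ring
  · rw [← sum_filter]
    exact sum_congr rfl fun u hu => by rw [(mem_filter.1 hu).2.2]

lemma moveCost_update [DecidableEq V] (hirr : ∀ v, ¬ A v v) (c : V → ι) (v : V) (j : ι) :
    moveCost A η d (Function.update c v j) v = moveCost A η d c v := by
  have hne {w : V} (h : A v w ∨ A w v) : w ≠ v := by
    rintro rfl; exact hirr w (h.elim id id)
  have hout (i : ι) : {w ∈ outNbrs A v | Function.update c v j w = i}
      = {w ∈ outNbrs A v | c w = i} :=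
    filter_congr fun w hw => by rw [Function.update_of_ne (hne (.inl (mem_outNbrs.1 hw)))]
  have hin (i : ι) : {u ∈ inNbrs A v | Function.update c v j u = i}
      = {u ∈ inNbrs A v | c u = i} :=
    filter_congr fun u hu => by rw [Function.update_of_ne (hne (.inr (mem_inNbrs.1 hu)))]
  ext i
  simp only [moveCost, hout, hin]

lemma energy_update_add [DecidableEq V] (hirr : ∀ v, ¬ A v v) (c : V → ι) (v : V) (j : ι) :
    energy A η d (Function.update c v j) + moveCost A η d c v (c v)
      = energy A η d c + moveCost A η d c v j := by
  have hloop (e : V → ι) : arcCost A η d e v v = 0 := if_neg fun h => hirr v h.1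
  have hrest :
      ∑ u ∈ univ.erase v, ∑ w ∈ univ.erase v, arcCost A η d (Function.update c v j) u w
        = ∑ u ∈ univ.erase v, ∑ w ∈ univ.erase v, arcCost A η d c u w :=
    sum_congr rfl fun u hu => sum_congr rfl fun w hw => by
      simp only [arcCost, Function.update_of_ne (ne_of_mem_erase hu),
        Function.update_of_ne (ne_of_mem_erase hw)]
  have hmove := sum_arcCost_add_sum_arcCost (A := A) (η := η) (d := d) (Function.update c v j) v
  rw [moveCost_update hirr, Function.update_self] at hmove
  rw [energy, energy, Fintype.sum_sum_eq_row_add_col_add_erase (hloop _),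
    Fintype.sum_sum_eq_row_add_col_add_erase (hloop _), hrest, ← sum_arcCost_add_sum_arcCost, hmove]
  ring

lemma sum_mul_moveCost [Fintype ι] (c : V → ι) (v : V) :
    ∑ j, (d j + 1 : ℚ) * moveCost A η d c v j
      = η v * #(outNbrs A v) + ∑ u ∈ inNbrs A v, η u := by
  have hcancel (j : ι) : (d j + 1 : ℚ) * moveCost A η d c v j
      = η v * #{w ∈ outNbrs A v | c w = j} + ∑ u ∈ inNbrs A v with c u = j, η u :=
    mul_div_cancel₀ _ (by positivity)
  rw [sum_congr rfl fun j _ => hcancel j, sum_add_distrib, ← mul_sum, sum_fiberwise,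
    card_eq_sum_card_fiberwise (f := c) (t := univ) fun _ _ => mem_coe.2 (mem_univ _)]
  push_cast
  rfl

lemma le_moveCost_self (hη : ∀ u, 0 ≤ η u) {c : V → ι} {v : V}
    (hv : d (c v) < #{w ∈ outNbrs A v | c w = c v}) : η v ≤ moveCost A η d c v (c v) := by
  have hcard : (d (c v) + 1 : ℚ) ≤ #{w ∈ outNbrs A v | c w = c v} := by exact_mod_cast hv
  rw [moveCost, le_div_iff₀ (by positivity)]
  nlinarith [hη v, sum_nonneg fun u (_ : u ∈ {u ∈ inNbrs A v | c u = c v}) => hη u]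

lemma exists_moveCost_lt [Fintype ι] {Δ : ℕ} (hsum : 2 * Δ + 1 ≤ ∑ j, (d j + 1))
    (c : V → ι) {v : V} (hv : 0 < η v) (hΔ : #(outNbrs A v) ≤ Δ)
    (hin : ∑ u ∈ inNbrs A v, η u < (Δ + 1) * η v) : ∃ j, moveCost A η d c v j < η v := by
  have hsumQ : (2 * Δ + 1 : ℚ) ≤ ∑ j, (d j + 1 : ℚ) := by exact_mod_cast hsum
  have hΔQ : (#(outNbrs A v) : ℚ) ≤ Δ := by exact_mod_cast hΔ
  have hlt : ∑ j, (d j + 1 : ℚ) * moveCost A η d c v j < ∑ j, (d j + 1 : ℚ) * η v := by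
    rw [sum_mul_moveCost, ← sum_mul]
    nlinarith
  obtain ⟨j, -, hj⟩ := exists_lt_of_sum_lt hlt
  exact ⟨j, lt_of_mul_lt_mul_left hj (by positivity)⟩

end Recolouring

theorem exists_colouring_card_le [DecidableEq V] {ι : Type*} [Fintype ι] [DecidableEq ι]
    [Nonempty ι] (hirr : ∀ v, ¬ A v v) (d : ι → ℕ) {Δ : ℕ} (hΔ : ∀ u, #(outNbrs A u) ≤ Δ)
    (hsum : 2 * Δ + 1 ≤ ∑ j, (d j + 1)) :
    ∃ c : V → ι, ∀ v, #{w ∈ outNbrs A v | c w = c v} ≤ d (c v) := by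
  obtain ⟨η, hη⟩ := exists_weight_sum_inNbrs_lt hΔ
  obtain ⟨c, -, hmin⟩ := exists_min_image univ (energy A η d) univ_nonempty
  refine ⟨c, fun v => not_lt.1 fun hv => ?_⟩
  obtain ⟨j, hj⟩ := exists_moveCost_lt hsum c (hη v).1 (hΔ v) (hη v).2
  have hself := le_moveCost_self (fun u => (hη u).1.le) hv
  have := energy_update_add (η := η) (d := d) hirr c v j
  linarith [hmin (Function.update c v j) (mem_univ _)]

end OutDegreePartition

section

open OutDegreePartition

variable {V : Type*} (A : V → V → Prop)

lemma outDeg_le_maxOutDeg [Finite V] (v : V) : outDeg A v ≤ maxOutDeg A :=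
  le_csSup (Set.finite_range _).bddAbove (Set.mem_range_self v)

lemma maxOutDegOn_le {S : Set V} {k : ℕ} (h : ∀ v ∈ S, outDegOn A S v ≤ k) :
    maxOutDegOn A S ≤ k :=
  csSup_le' <| Set.forall_mem_image.2 h

variable [Fintype V] [DecidableRel A]

lemma outDeg_eq_card_outNbrs (v : V) : outDeg A v = #(outNbrs A v) := by
  rw [outDeg, ← Set.ncard_coe_finset]
  congr 1
  ext w
  simp

lemma outDegOn_fiber_eq_card {ι : Type*} [DecidableEq ι] (c : V → ι) (v : V) :
    outDegOn A {w | c w = c v} v = #{w ∈ outNbrs A v | c w = c v} := by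
  rw [outDegOn, ← Set.ncard_coe_finset]
  congr 1
  ext w
  simp [and_comm]

end

/-- **Alon.** Let `D` be a digraph of maximum out-degree `Δ⁺` and let
`d₁, …, d_p` be non-negative integers with `d₁ + ⋯ + d_p + (p − 1) ≥ 2Δ⁺`. Then `D` has
a `p`-partition `(V₁, …, V_p)` with `Δ⁺(D⟨Vᵢ⟩) ≤ dᵢ` for every `i ∈ [p]`. -/
theorem stmt15 {V : Type*} [Fintype V]
    (A : V → V → Prop) (hirr : ∀ v, ¬ A v v)
    (p : ℕ) (hp : 0 < p) (d : Fin p → ℕ)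
    (hsum : 2 * maxOutDeg A ≤ (∑ i, d i) + (p - 1)) :
    ∃ P : Fin p → Set V,
      Pairwise (fun i j => Disjoint (P i) (P j)) ∧
      (⋃ i, P i) = Set.univ ∧
      ∀ i, maxOutDegOn A (P i) ≤ d i := by
  classical
  have : Nonempty (Fin p) := ⟨⟨0, hp⟩⟩
  have hsum' : 2 * maxOutDeg A + 1 ≤ ∑ i, (d i + 1) := by
    rw [Finset.sum_add_distrib]
    simp only [Finset.sum_const, Finset.card_univ, Fintype.card_fin, smul_eq_mul, mul_one]
    omega
  obtain ⟨c, hc⟩ := OutDegreePartition.exists_colouring_card_le hirr d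
    (fun u => outDeg_eq_card_outNbrs A u ▸ outDeg_le_maxOutDeg A u) hsum'
  refine ⟨fun i => {v | c v = i}, fun i j hij => Set.disjoint_left.2 fun v hi hj => hij ?_,
    Set.iUnion_eq_univ_iff.2 fun v => ⟨c v, rfl⟩, fun i => maxOutDegOn_le A ?_⟩
  · exact (hi : c v = i).symm.trans hj
  · rintro v (rfl : c v = i)
    rw [outDegOn_fiber_eq_card]
    exact hc v
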